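/- arXiv:1802.06363 — 6 statements merged into one kernel-verified Lean document; each statement's English description precedes it below -/
import Mathlib

section
/- Let (f_k)_{k∈ℕ} be a Bessel sequence in a Hilbert space H₁ with bound B, (g_k)_{k∈ℕ} a Bessel sequence in a Hilbert space H₂ with bound B', and m = (m_k) ∈ ℓ^∞. Then the Bessel multiplier M_{m,(g_k),(f_k)} f = ∑_k m_k ⟨f, f_k⟩ g_k is a well-defined bounded linear operator from H₁ to H₂ with ‖M_{m,(g_k),(f_k)}‖ ≤ √(BB')·‖m‖_∞, and for every f ∈ H₁ the series ∑_k m_k ⟨f, f_k⟩ g_k converges unconditionally in H₂. -/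
/-!
The multiplier factors as `U_g ∘ D_m ∘ T_f`: the analysis operator `T_f x = (⟨f k, x⟩)_k` maps
`H₁` into `ℓ²` with norm at most `√B`, pointwise multiplication `D_m` by `m ∈ ℓ^∞` has norm at
most `‖m‖_∞` on `ℓ²`, and the synthesis operator `U_g = T_g^*` has norm `‖T_g‖ ≤ √B'`.
Since `U_g` sends the `k`-th unit vector to `g k` and the finitely supported truncations of
`c ∈ ℓ²` converge to `c`, continuity of `U_g` gives unconditional convergence of `∑ c_k g_k`.
-/

noncomputable section
open scoped ENNReal

theorem lp.norm_sq_eq_tsum {ι : Type*} {E : ι → Type*} [∀ i, NormedAddCommGroup (E i)]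
    (f : lp E 2) : ‖f‖ ^ 2 = ∑' i, ‖f i‖ ^ 2 := by
  simpa using lp.norm_rpow_eq_tsum (p := 2) (by norm_num) f

namespace lp

variable {𝕜 ι : Type*} [RCLike 𝕜] {p : ℝ≥0∞}

theorem norm_infty_mul_apply_le (m : lp (fun _ : ι => 𝕜) ∞) (c : ι → 𝕜) (i : ι) :
    ‖m i * c i‖ ≤ ‖m‖ * ‖c i‖ := by
  rw [norm_mul]
  exact mul_le_mul_of_nonneg_right (norm_apply_le_norm ENNReal.top_ne_zero m i) (norm_nonneg _)

theorem memℓp_infty_mul (m : lp (fun _ : ι => 𝕜) ∞) (c : lp (fun _ : ι => 𝕜) p) :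
    Memℓp (fun i => m i * c i) p :=
  ((lp.memℓp c).norm.const_smul ‖m‖).mono fun i => norm_infty_mul_apply_le m c i

def diagonal [Fact (1 ≤ p)] (m : lp (fun _ : ι => 𝕜) ∞) :
    lp (fun _ : ι => 𝕜) p →L[𝕜] lp (fun _ : ι => 𝕜) p :=
  LinearMap.mkContinuous
    { toFun := fun c => ⟨fun i => m i * c i, memℓp_infty_mul m c⟩
      map_add' := fun c d => by ext i; exact mul_add _ _ _
      map_smul' := fun a c => by ext i; simp [mul_left_comm] }
    ‖m‖ fun c => by
      have hp : p ≠ 0 := (zero_lt_one.trans_le Fact.out).ne'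
      calc _ ≤ ‖(‖m‖ : 𝕜) • c‖ :=
            norm_mono hp fun i => by simpa [norm_smul] using norm_infty_mul_apply_le m c i
        _ = ‖m‖ * ‖c‖ := by rw [norm_const_smul hp]; simp

theorem norm_diagonal_le [Fact (1 ≤ p)] (m : lp (fun _ : ι => 𝕜) ∞) :
    ‖(diagonal m : lp (fun _ : ι => 𝕜) p →L[𝕜] _)‖ ≤ ‖m‖ :=
  LinearMap.mkContinuous_norm_le _ (norm_nonneg m) _

end lp

/-- The inner product is conjugate-linear in its first argument, so the coefficient
`⟨x, v k⟩` of the paper is `inner 𝕜 (v k) x` here. -/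
def IsBesselSeq (𝕜 : Type*) {E ι : Type*} [RCLike 𝕜] [NormedAddCommGroup E]
    [InnerProductSpace 𝕜 E] (v : ι → E) (B : ℝ) : Prop :=
  ∀ x : E, Summable (fun k => ‖inner 𝕜 (v k) x‖ ^ 2) ∧ ∑' k, ‖inner 𝕜 (v k) x‖ ^ 2 ≤ B * ‖x‖ ^ 2

namespace IsBesselSeq

variable {𝕜 E ι : Type*} [RCLike 𝕜] [NormedAddCommGroup E] [InnerProductSpace 𝕜 E]
  {v : ι → E} {B : ℝ}

theorem memℓp_inner (hv : IsBesselSeq 𝕜 v B) (x : E) : Memℓp (fun k => inner 𝕜 (v k) x) 2 :=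
  (memℓp_gen_iff (by norm_num)).2 (by simpa using (hv x).1)

def analysis (hv : IsBesselSeq 𝕜 v B) : E →L[𝕜] lp (fun _ : ι => 𝕜) 2 :=
  LinearMap.mkContinuous
    { toFun := fun x => ⟨fun k => inner 𝕜 (v k) x, hv.memℓp_inner x⟩
      map_add' := fun x y => by ext k; exact inner_add_right _ _ _
      map_smul' := fun a x => by ext k; simp [inner_smul_right] }
    √B fun x => by
      have h := (hv x).2
      rw [← lp.norm_sq_eq_tsum (⟨_, hv.memℓp_inner x⟩ : lp _ 2)] at h
      simpa [Real.sqrt_mul' B (sq_nonneg ‖x‖)] using Real.abs_le_sqrt h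

@[simp]
theorem analysis_apply (hv : IsBesselSeq 𝕜 v B) (x : E) (k : ι) :
    hv.analysis x k = inner 𝕜 (v k) x := rfl

theorem norm_analysis_le (hv : IsBesselSeq 𝕜 v B) : ‖hv.analysis‖ ≤ √B :=
  LinearMap.mkContinuous_norm_le _ (Real.sqrt_nonneg B) _

variable [CompleteSpace E]

def synthesis (hv : IsBesselSeq 𝕜 v B) : lp (fun _ : ι => 𝕜) 2 →L[𝕜] E :=
  ContinuousLinearMap.adjoint hv.analysis

theorem norm_synthesis_le (hv : IsBesselSeq 𝕜 v B) : ‖hv.synthesis‖ ≤ √B :=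
  (ContinuousLinearMap.adjoint.norm_map hv.analysis).trans_le hv.norm_analysis_le

theorem synthesis_single [DecidableEq ι] (hv : IsBesselSeq 𝕜 v B) (k : ι) (a : 𝕜) :
    hv.synthesis (lp.single 2 k a) = a • v k :=
  ext_inner_right 𝕜 fun y => by
    rw [synthesis, ContinuousLinearMap.adjoint_inner_left, lp.inner_single_left, analysis_apply,
      inner_smul_left, RCLike.inner_apply']

theorem hasSum_synthesis (hv : IsBesselSeq 𝕜 v B) (c : lp (fun _ : ι => 𝕜) 2) :
    HasSum (fun k => c k • v k) (hv.synthesis c) := by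
  classical
  simpa [hv.synthesis_single] using (lp.hasSum_single (by norm_num) c).mapL hv.synthesis

end IsBesselSeq

theorem bessel_multiplier_bounded_general
    {H₁ H₂ : Type*} [NormedAddCommGroup H₁] [InnerProductSpace ℂ H₁]
    [NormedAddCommGroup H₂] [InnerProductSpace ℂ H₂] [CompleteSpace H₂]
    (f : ℕ → H₁) (g : ℕ → H₂) (B B' : ℝ) (hB : 0 < B)
    (hf : ∀ x : H₁, Summable (fun k => ‖(inner ℂ (f k) x : ℂ)‖ ^ 2) ∧
      ∑' k, ‖(inner ℂ (f k) x : ℂ)‖ ^ 2 ≤ B * ‖x‖ ^ 2)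
    (hg : ∀ y : H₂, Summable (fun k => ‖(inner ℂ (g k) y : ℂ)‖ ^ 2) ∧
      ∑' k, ‖(inner ℂ (g k) y : ℂ)‖ ^ 2 ≤ B' * ‖y‖ ^ 2)
    (m : lp (fun _ : ℕ => ℂ) ∞) :
    ∃ M : H₁ →L[ℂ] H₂,
      ‖M‖ ≤ Real.sqrt (B * B') * ‖m‖ ∧
      ∀ x : H₁, HasSum (fun k => m k • (inner ℂ (f k) x : ℂ) • g k) (M x) := by
  let T := IsBesselSeq.analysis hf
  let U := IsBesselSeq.synthesis hg
  refine ⟨U ∘L lp.diagonal m ∘L T, ?_, fun x => ?_⟩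
  · calc ‖U ∘L lp.diagonal m ∘L T‖ ≤ ‖U‖ * (‖lp.diagonal m‖ * ‖T‖) :=
          (U.opNorm_comp_le _).trans (by gcongr; exact ContinuousLinearMap.opNorm_comp_le _ _)
      _ ≤ √B' * (‖m‖ * √B) := by
          gcongr
          exacts [IsBesselSeq.norm_synthesis_le hg, lp.norm_diagonal_le m,
            IsBesselSeq.norm_analysis_le hf]
      _ = √(B * B') * ‖m‖ := by rw [Real.sqrt_mul hB.le]; ring
  · simp only [smul_smul]
    exact IsBesselSeq.hasSum_synthesis hg (lp.diagonal m (T x))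

/-- If `(f k)` is a Bessel sequence in `H₁` with bound `B`, `(g k)` is a
Bessel sequence in `H₂` with bound `B'`, and `m ∈ ℓ^∞`, then the Bessel multiplier
`f ↦ ∑ k, m k ⟨f, f k⟩ g k` is a well-defined bounded linear operator from `H₁` to `H₂`
with norm at most `√(B B') ‖m‖_∞`, the series converging unconditionally. -/
theorem bessel_multiplier_bounded
    {H₁ H₂ : Type*} [NormedAddCommGroup H₁] [InnerProductSpace ℂ H₁] [CompleteSpace H₁]
    [NormedAddCommGroup H₂] [InnerProductSpace ℂ H₂] [CompleteSpace H₂]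
    (f : ℕ → H₁) (g : ℕ → H₂) (B B' : ℝ) (hB : 0 < B) (hB' : 0 < B')
    (hf : ∀ x : H₁, Summable (fun k => ‖(inner ℂ (f k) x : ℂ)‖ ^ 2) ∧
      ∑' k, ‖(inner ℂ (f k) x : ℂ)‖ ^ 2 ≤ B * ‖x‖ ^ 2)
    (hg : ∀ y : H₂, Summable (fun k => ‖(inner ℂ (g k) y : ℂ)‖ ^ 2) ∧
      ∑' k, ‖(inner ℂ (g k) y : ℂ)‖ ^ 2 ≤ B' * ‖y‖ ^ 2)
    (m : lp (fun _ : ℕ => ℂ) ∞) :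
    ∃ M : H₁ →L[ℂ] H₂,
      ‖M‖ ≤ Real.sqrt (B * B') * ‖m‖ ∧
      ∀ x : H₁, HasSum (fun k => m k • (inner ℂ (f k) x : ℂ) • g k) (M x) :=
  bessel_multiplier_bounded_general f g B B' hB hf hg m
end
end

section
/- Let (f_k)_{k∈ℕ}, (g_k)_{k∈ℕ}, (l_k)_{k∈ℕ} be Bessel sequences in a Hilbert space H₂ and (h_k)_{k∈ℕ} a Bessel sequence in a Hilbert space H₁, such that (l_k) and (f_k) are biorthogonal, i.e. ⟨l_j, f_k⟩ = δ_{jk} for all j, k. Then for all bounded operators U₁, U₂ on ℓ²(ℕ): M_{U₁,(g_k),(f_k)} ∘ M_{U₂,(l_k),(h_k)} = M_{U₁∘U₂,(g_k),(h_k)}. -/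
/-! Biorthogonality of `(l k)` and `(f k)` makes `C_f ∘ D_l` the identity of `ℓ²`, so the middle
factor of the composed multipliers cancels. -/

noncomputable section

local notation "ℓ²" => lp (fun _ : ℕ => ℂ) 2

theorem inner_eq_of_hasSum_smul_of_biorthogonal {𝕜 E ι : Type*} [RCLike 𝕜]
    [NormedAddCommGroup E] [InnerProductSpace 𝕜 E] [DecidableEq ι] {f l : ι → E}
    (hbi : ∀ j k : ι, inner 𝕜 (f k) (l j) = if j = k then 1 else 0)
    {c : ι → 𝕜} {y : E} (hy : HasSum (fun j => c j • l j) y) (k : ι) :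
    inner 𝕜 (f k) y = c k := by
  have hsum := hy.mapL (innerSL 𝕜 (f k))
  simp only [innerSL_apply_apply, inner_smul_right, hbi, mul_ite, mul_one, mul_zero] at hsum
  refine hsum.unique ?_
  convert hasSum_ite_eq k (c k) using 2 with j
  split_ifs with hj <;> simp [hj]

theorem generalized_multiplier_comp_of_biorthogonal_general
    {H₁ H₂ : Type*} [NormedAddCommGroup H₁] [InnerProductSpace ℂ H₁]
    [NormedAddCommGroup H₂] [InnerProductSpace ℂ H₂]
    (f l : ℕ → H₂)
    (hbi : ∀ j k : ℕ, (inner ℂ (f k) (l j)) = if j = k then 1 else 0)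
    (Cf : H₂ →L[ℂ] ℓ²) (Dg : ℓ² →L[ℂ] H₂) (Ch : H₁ →L[ℂ] ℓ²) (Dl : ℓ² →L[ℂ] H₂)
    (hCf : ∀ (x : H₂) (k : ℕ), Cf x k = (inner ℂ (f k) x))
    (hDl : ∀ c : ℓ², HasSum (fun k => c k • l k) (Dl c))
    (U₁ U₂ : ℓ² →L[ℂ] ℓ²) :
    (Dg.comp (U₁.comp Cf)).comp (Dl.comp (U₂.comp Ch)) =
      Dg.comp ((U₁.comp U₂).comp Ch) := by
  have hCfDl : ∀ c : ℓ², Cf (Dl c) = c := fun c => by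
    ext k
    rw [hCf, inner_eq_of_hasSum_smul_of_biorthogonal hbi (hDl c) k]
  ext x
  simp [hCfDl]

/-- Let `(f k)`, `(g k)`, `(l k)` be Bessel sequences in `H₂` and `(h k)`
a Bessel sequence in `H₁`, with `(l k)` and `(f k)` biorthogonal, i.e. `⟨l j, f k⟩ = δ_{jk}`.
Then for all bounded operators `U₁, U₂` on `ℓ²(ℕ)`:
`M_{U₁,(g k),(f k)} ∘ M_{U₂,(l k),(h k)} = M_{U₁ ∘ U₂,(g k),(h k)}`. -/
theorem generalized_multiplier_comp_of_biorthogonal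
    {H₁ H₂ : Type*} [NormedAddCommGroup H₁] [InnerProductSpace ℂ H₁] [CompleteSpace H₁]
    [NormedAddCommGroup H₂] [InnerProductSpace ℂ H₂] [CompleteSpace H₂]
    (f g l : ℕ → H₂) (h : ℕ → H₁) (Bf Bg Bl Bh : ℝ)
    (hBf : 0 < Bf) (hBg : 0 < Bg) (hBl : 0 < Bl) (hBh : 0 < Bh)
    (hf : ∀ x : H₂, Summable (fun k => ‖(inner ℂ (f k) x)‖ ^ 2) ∧
      ∑' k, ‖(inner ℂ (f k) x)‖ ^ 2 ≤ Bf * ‖x‖ ^ 2)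
    (hg : ∀ x : H₂, Summable (fun k => ‖(inner ℂ (g k) x)‖ ^ 2) ∧
      ∑' k, ‖(inner ℂ (g k) x)‖ ^ 2 ≤ Bg * ‖x‖ ^ 2)
    (hl : ∀ x : H₂, Summable (fun k => ‖(inner ℂ (l k) x)‖ ^ 2) ∧
      ∑' k, ‖(inner ℂ (l k) x)‖ ^ 2 ≤ Bl * ‖x‖ ^ 2)
    (hh : ∀ x : H₁, Summable (fun k => ‖(inner ℂ (h k) x)‖ ^ 2) ∧
      ∑' k, ‖(inner ℂ (h k) x)‖ ^ 2 ≤ Bh * ‖x‖ ^ 2)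
    (hbi : ∀ j k : ℕ, (inner ℂ (f k) (l j)) = if j = k then 1 else 0)
    (Cf : H₂ →L[ℂ] ℓ²) (Dg : ℓ² →L[ℂ] H₂) (Ch : H₁ →L[ℂ] ℓ²) (Dl : ℓ² →L[ℂ] H₂)
    (hCf : ∀ (x : H₂) (k : ℕ), Cf x k = (inner ℂ (f k) x))
    (hDg : ∀ c : ℓ², HasSum (fun k => c k • g k) (Dg c))
    (hCh : ∀ (x : H₁) (k : ℕ), Ch x k = (inner ℂ (h k) x))
    (hDl : ∀ c : ℓ², HasSum (fun k => c k • l k) (Dl c))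
    (U₁ U₂ : ℓ² →L[ℂ] ℓ²) :
    (Dg.comp (U₁.comp Cf)).comp (Dl.comp (U₂.comp Ch)) =
      Dg.comp ((U₁.comp U₂).comp Ch) :=
  generalized_multiplier_comp_of_biorthogonal_general f l hbi Cf Dg Ch Dl hCf hDl U₁ U₂
end
end

section
/- Let (f_k)_{k∈ℕ} and (g_k)_{k∈ℕ} be Riesz bases for a Hilbert space H and U a nonzero bounded operator on ℓ²(ℕ). Then U is invertible in B(ℓ²(ℕ)) if and only if the generalized Bessel multiplier M_{U,(g_k),(f_k)} = D_{(g_k)} ∘ U ∘ C_{(f_k)} is invertible in B(H). -/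
/-!
The lower Riesz bound makes a synthesis operator `D : ℓ² → H` antilipschitz, hence injective
with closed range; its range contains the basis vectors, whose span is dense, so `D` is an
isomorphism. Thus `D_g` and `C_f = D_f†` are isomorphisms, and `D_g ∘ U ∘ C_f` is `U` composed
on both sides with isomorphisms, which is invertible exactly when `U` is.
-/

noncomputable section

local notation "ℓ²" => lp (fun _ : ℕ => ℂ) 2

open ContinuousLinearMap

namespace ContinuousLinearMap

theorem isUnit_iff_isInvertible {R M : Type*} [Semiring R] [AddCommMonoid M] [Module R M]
    [TopologicalSpace M] (T : M →L[R] M) : IsUnit T ↔ T.IsInvertible :=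
  ⟨fun ⟨u, hu⟩ => ⟨ContinuousLinearEquiv.unitsEquiv R M u, hu⟩,
    fun ⟨e, he⟩ => ⟨(ContinuousLinearEquiv.unitsEquiv R M).symm e, he⟩⟩

theorem IsInvertible.adjoint {𝕜 E F : Type*} [RCLike 𝕜] [NormedAddCommGroup E]
    [InnerProductSpace 𝕜 E] [CompleteSpace E] [NormedAddCommGroup F] [InnerProductSpace 𝕜 F]
    [CompleteSpace F] {A : E →L[𝕜] F} (hA : A.IsInvertible) : (adjoint A).IsInvertible := by
  obtain ⟨e, rfl⟩ := hA
  refine .of_inverse (g := ContinuousLinearMap.adjoint (e.symm : F →L[𝕜] E)) ?_ ?_ <;>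
    simp [← adjoint_comp, adjoint_id]

theorem isInvertible_of_antilipschitz_of_denseRange {𝕜 E F : Type*} [NontriviallyNormedField 𝕜]
    [NormedAddCommGroup E] [NormedSpace 𝕜 E] [CompleteSpace E]
    [NormedAddCommGroup F] [NormedSpace 𝕜 F] [CompleteSpace F]
    {T : E →L[𝕜] F} {K : NNReal} (hT : AntilipschitzWith K T) (hdense : DenseRange T) :
    T.IsInvertible := by
  have hsurj : Function.Surjective T := by
    rw [← Set.range_eq_univ, ← (hT.isClosed_range T.uniformContinuous).closure_eq]
    exact hdense.closure_range
  exact ⟨.ofBijective T (LinearMap.ker_eq_bot.mpr hT.injective)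
    (LinearMap.range_eq_top.mpr hsurj), rfl⟩

theorem antilipschitz_of_sq_lower_bound {R E F : Type*} [Ring R]
    [SeminormedAddCommGroup E] [Module R E] [SeminormedAddCommGroup F] [Module R F]
    {T : E →L[R] F} {A : ℝ} (hA : 0 < A) (hT : ∀ x, A * ‖x‖ ^ 2 ≤ ‖T x‖ ^ 2) :
    AntilipschitzWith (Real.toNNReal (Real.sqrt A)⁻¹) T := by
  refine T.antilipschitz_of_bound fun x => ?_
  have hsqrt : 0 < Real.sqrt A := Real.sqrt_pos.mpr hA
  rw [Real.coe_toNNReal _ (inv_nonneg.mpr hsqrt.le), inv_mul_eq_div, le_div_iff₀' hsqrt]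
  refine (pow_le_pow_iff_left₀ (by positivity) (norm_nonneg _) two_ne_zero).mp ?_
  rw [mul_pow, Real.sq_sqrt hA.le]
  exact hT x

end ContinuousLinearMap

section SynthesisOperator

variable {ι 𝕜 E : Type*} [NontriviallyNormedField 𝕜] [NormedAddCommGroup E] [NormedSpace 𝕜 E]

def IsSynthesisOperator (f : ι → E) (D : lp (fun _ : ι => 𝕜) 2 →L[𝕜] E) : Prop :=
  ∀ c, HasSum (fun k => c k • f k) (D c)

namespace IsSynthesisOperator

variable {f : ι → E} {D : lp (fun _ : ι => 𝕜) 2 →L[𝕜] E}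

theorem range_subset (hD : IsSynthesisOperator f D) : Set.range f ⊆ Set.range D := by
  classical
  rintro _ ⟨k, rfl⟩
  refine ⟨lp.single 2 k 1, (hD _).unique ?_⟩
  convert hasSum_single k fun j hj => ?_ using 1
  · simp [lp.single_apply]
  · simp [lp.single_apply, hj]

theorem denseRange (hD : IsSynthesisOperator f D)
    (hspan : (Submodule.span 𝕜 (Set.range f)).topologicalClosure = ⊤) : DenseRange D := by
  have hle : Submodule.span 𝕜 (Set.range f) ≤ (D : lp (fun _ : ι => 𝕜) 2 →ₗ[𝕜] E).range := by
    rw [Submodule.span_le, LinearMap.coe_range]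
    exact hD.range_subset
  exact (Submodule.dense_iff_topologicalClosure_eq_top.mpr hspan).mono hle

theorem isInvertible [CompleteSpace 𝕜] [CompleteSpace E] (hD : IsSynthesisOperator f D)
    (hspan : (Submodule.span 𝕜 (Set.range f)).topologicalClosure = ⊤)
    {A : ℝ} (hA : 0 < A) (hlower : ∀ c, A * ‖c‖ ^ 2 ≤ ‖D c‖ ^ 2) : D.IsInvertible :=
  isInvertible_of_antilipschitz_of_denseRange (antilipschitz_of_sq_lower_bound hA hlower)
    (hD.denseRange hspan)

end IsSynthesisOperator

end SynthesisOperator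

theorem IsSynthesisOperator.eq_adjoint {ι 𝕜 E : Type*} [RCLike 𝕜] [NormedAddCommGroup E]
    [InnerProductSpace 𝕜 E] [CompleteSpace E] {f : ι → E} {D : lp (fun _ : ι => 𝕜) 2 →L[𝕜] E}
    (hD : IsSynthesisOperator f D) {C : E →L[𝕜] lp (fun _ : ι => 𝕜) 2}
    (hC : ∀ x k, C x k = inner 𝕜 (f k) x) : C = adjoint D := by
  refine (eq_adjoint_iff C D).mpr fun x c => (lp.hasSum_inner (C x) c).unique ?_
  have hsum := (innerSL 𝕜 x).hasSum (hD c)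
  simp only [innerSL_apply_apply, inner_smul_right] at hsum
  convert hsum using 2 with k
  simp [hC, mul_comm]

theorem generalized_riesz_multiplier_invertible_iff_general
    {H : Type*} [NormedAddCommGroup H] [InnerProductSpace ℂ H] [CompleteSpace H]
    (f g : ℕ → H) (A B A' B' : ℝ) (hA : 0 < A) (hA' : 0 < A')
    (Df Dg : ℓ² →L[ℂ] H) (Cf : H →L[ℂ] ℓ²)
    (hDf : ∀ c : ℓ², HasSum (fun k => c k • f k) (Df c))
    (hDg : ∀ c : ℓ², HasSum (fun k => c k • g k) (Dg c))
    (hCf : ∀ (x : H) (k : ℕ), Cf x k = (inner ℂ (f k) x : ℂ))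
    (hfspan : (Submodule.span ℂ (Set.range f)).topologicalClosure = ⊤)
    (hgspan : (Submodule.span ℂ (Set.range g)).topologicalClosure = ⊤)
    (hfRiesz : ∀ c : ℓ², A * ‖c‖ ^ 2 ≤ ‖Df c‖ ^ 2 ∧ ‖Df c‖ ^ 2 ≤ B * ‖c‖ ^ 2)
    (hgRiesz : ∀ c : ℓ², A' * ‖c‖ ^ 2 ≤ ‖Dg c‖ ^ 2 ∧ ‖Dg c‖ ^ 2 ≤ B' * ‖c‖ ^ 2)
    (U : ℓ² →L[ℂ] ℓ²) :
    IsUnit U ↔ IsUnit (Dg.comp (U.comp Cf)) := by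
  obtain ⟨eG, rfl⟩ : Dg.IsInvertible :=
    IsSynthesisOperator.isInvertible hDg hgspan hA' fun c => (hgRiesz c).1
  obtain ⟨eC, rfl⟩ : Cf.IsInvertible := by
    rw [IsSynthesisOperator.eq_adjoint hDf hCf]
    exact (IsSynthesisOperator.isInvertible hDf hfspan hA fun c => (hfRiesz c).1).adjoint
  simp only [isUnit_iff_isInvertible, isInvertible_equiv_comp, isInvertible_comp_equiv]

/-- Let `(f k)` and `(g k)` be Riesz bases for `H` and `U` a nonzero
bounded operator on `ℓ²(ℕ)`. Then `U` is invertible in `B(ℓ²(ℕ))` if and only if the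
generalized Bessel multiplier `M = D_g ∘ U ∘ C_f` is invertible in `B(H)`. -/
theorem generalized_riesz_multiplier_invertible_iff
    {H : Type*} [NormedAddCommGroup H] [InnerProductSpace ℂ H] [CompleteSpace H]
    (f g : ℕ → H) (A B A' B' : ℝ) (hA : 0 < A) (hB : 0 < B) (hA' : 0 < A') (hB' : 0 < B')
    (Df Dg : ℓ² →L[ℂ] H) (Cf : H →L[ℂ] ℓ²)
    (hDf : ∀ c : ℓ², HasSum (fun k => c k • f k) (Df c))
    (hDg : ∀ c : ℓ², HasSum (fun k => c k • g k) (Dg c))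
    (hCf : ∀ (x : H) (k : ℕ), Cf x k = (inner ℂ (f k) x : ℂ))
    (hfspan : (Submodule.span ℂ (Set.range f)).topologicalClosure = ⊤)
    (hgspan : (Submodule.span ℂ (Set.range g)).topologicalClosure = ⊤)
    (hfRiesz : ∀ c : ℓ², A * ‖c‖ ^ 2 ≤ ‖Df c‖ ^ 2 ∧ ‖Df c‖ ^ 2 ≤ B * ‖c‖ ^ 2)
    (hgRiesz : ∀ c : ℓ², A' * ‖c‖ ^ 2 ≤ ‖Dg c‖ ^ 2 ∧ ‖Dg c‖ ^ 2 ≤ B' * ‖c‖ ^ 2)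
    (U : ℓ² →L[ℂ] ℓ²) (hU : U ≠ 0) :
    IsUnit U ↔ IsUnit (Dg.comp (U.comp Cf)) :=
  generalized_riesz_multiplier_invertible_iff_general f g A B A' B' hA hA' Df Dg Cf hDf hDg hCf
    hfspan hgspan hfRiesz hgRiesz U
end
end

section
/- Let (f_k)_{k∈ℕ} and (g_k)_{k∈ℕ} be Bessel sequences in a Hilbert space H, with (f_k) having Bessel bound B, and let U be a nonzero bounded operator on ℓ²(ℕ). If the generalized Bessel multiplier M_{U,(g_k),(f_k)} is invertible in B(H), then (g_k) satisfies the lower frame condition for H; more precisely, ‖g‖² ≤ B‖U‖²‖M_{U,(g_k),(f_k)}⁻¹‖² · ∑_k |⟨g_k, g⟩|² for every g ∈ H. -/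
noncomputable section

local notation "ℓ²" => lp (fun _ : ℕ => ℂ) 2

/-! Writing `c = U (C (N y))`, invertibility gives `y = D c`, so
`‖y‖² = ⟪D c, y⟫ = ⟪c, (⟪g k, y⟫)ₖ⟫ ≤ ‖c‖ (∑ₖ |⟪g k, y⟫|²)^{1/2}`, while the Bessel bound of `f`
gives `‖c‖ ≤ √B ‖U‖ ‖N‖ ‖y‖`; squaring and cancelling `‖y‖²` yields the lower frame bound. -/

theorem lp.norm_sq_eq_tsum_norm_sq {ι : Type*} {E : ι → Type*}
    [∀ i, NormedAddCommGroup (E i)] (v : lp E 2) : ‖v‖ ^ 2 = ∑' i, ‖v i‖ ^ 2 := by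
  simpa using lp.norm_rpow_eq_tsum (p := 2) (by norm_num) v

theorem memℓp_two_of_summable_norm_sq {ι : Type*} {E : ι → Type*}
    [∀ i, NormedAddCommGroup (E i)] {f : ∀ i, E i} (hf : Summable fun i => ‖f i‖ ^ 2) :
    Memℓp f 2 :=
  memℓp_gen (by simpa using hf)

theorem norm_inner_synthesis_sq_le {ι 𝕜 H : Type*} [RCLike 𝕜] [NormedAddCommGroup H]
    [InnerProductSpace 𝕜 H] {g : ι → H} {D : lp (fun _ : ι => 𝕜) 2 →L[𝕜] H}
    (hD : ∀ c, HasSum (fun k => c k • g k) (D c)) (c : lp (fun _ : ι => 𝕜) 2) {y : H}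
    (hy : Summable fun k => ‖(inner 𝕜 (g k) y : 𝕜)‖ ^ 2) :
    ‖(inner 𝕜 (D c) y : 𝕜)‖ ^ 2 ≤ ‖c‖ ^ 2 * ∑' k, ‖(inner 𝕜 (g k) y : 𝕜)‖ ^ 2 := by
  let b : lp (fun _ : ι => 𝕜) 2 :=
    ⟨fun k => inner 𝕜 (g k) y, memℓp_two_of_summable_norm_sq hy⟩
  -- the analysis operator of `g` is the adjoint of its synthesis operator `D`
  have hadjoint : (inner 𝕜 (D c) y : 𝕜) = inner 𝕜 c b := by
    refine ((hD c).mapL (innerSLFlip 𝕜 y)).unique ?_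
    convert lp.hasSum_inner c b using 1
    funext k
    simp only [innerSLFlip_apply_apply, inner_smul_left, RCLike.inner_apply']
    rfl
  rw [hadjoint, ← lp.norm_sq_eq_tsum_norm_sq b, ← mul_pow]
  gcongr
  exact norm_inner_le_norm c b

theorem lower_frame_condition_of_invertible_multiplier_general
    {H : Type*} [NormedAddCommGroup H] [InnerProductSpace ℂ H]
    (f g : ℕ → H) (B B' : ℝ) (hB : 0 < B)
    (hf : ∀ x : H, Summable (fun k => ‖(inner ℂ (f k) x : ℂ)‖ ^ 2) ∧
      ∑' k, ‖(inner ℂ (f k) x : ℂ)‖ ^ 2 ≤ B * ‖x‖ ^ 2)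
    (hg : ∀ y : H, Summable (fun k => ‖(inner ℂ (g k) y : ℂ)‖ ^ 2) ∧
      ∑' k, ‖(inner ℂ (g k) y : ℂ)‖ ^ 2 ≤ B' * ‖y‖ ^ 2)
    (U : ℓ² →L[ℂ] ℓ²)
    (C : H →L[ℂ] ℓ²) (D : ℓ² →L[ℂ] H)
    (hC : ∀ (x : H) (k : ℕ), C x k = (inner ℂ (f k) x : ℂ))
    (hD : ∀ c : ℓ², HasSum (fun k => c k • g k) (D c))
    (N : H →L[ℂ] H)
    (hMN : (D.comp (U.comp C)).comp N = ContinuousLinearMap.id ℂ H) :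
    ∀ y : H, ‖y‖ ^ 2 ≤ B * ‖U‖ ^ 2 * ‖N‖ ^ 2 * ∑' k, ‖(inner ℂ (g k) y : ℂ)‖ ^ 2 := by
  intro y
  set c := U (C (N y))
  set S := ∑' k, ‖(inner ℂ (g k) y : ℂ)‖ ^ 2
  have hDc : D c = y := congrArg (· y) hMN
  have hCN : ‖C (N y)‖ ^ 2 ≤ B * ‖N y‖ ^ 2 := by
    simpa only [lp.norm_sq_eq_tsum_norm_sq, hC] using (hf (N y)).2
  have hc : ‖c‖ ^ 2 ≤ B * ‖U‖ ^ 2 * ‖N‖ ^ 2 * ‖y‖ ^ 2 :=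
    calc ‖c‖ ^ 2 ≤ (‖U‖ * ‖C (N y)‖) ^ 2 := by gcongr; exact U.le_opNorm _
      _ ≤ ‖U‖ ^ 2 * (B * ‖N y‖ ^ 2) := by rw [mul_pow]; gcongr
      _ ≤ ‖U‖ ^ 2 * (B * (‖N‖ * ‖y‖) ^ 2) := by gcongr; exact N.le_opNorm y
      _ = B * ‖U‖ ^ 2 * ‖N‖ ^ 2 * ‖y‖ ^ 2 := by ring
  have hy : (‖y‖ ^ 2) ^ 2 ≤ ‖c‖ ^ 2 * S := by
    simpa [hDc, inner_self_eq_norm_sq_to_K] using norm_inner_synthesis_sq_le hD c (hg y).1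
  rcases eq_or_ne y 0 with rfl | hy_ne
  · simp [S]
  · refine le_of_mul_le_mul_right ?_ (by positivity : 0 < ‖y‖ ^ 2)
    calc ‖y‖ ^ 2 * ‖y‖ ^ 2 ≤ ‖c‖ ^ 2 * S := by rw [← sq]; exact hy
      _ ≤ B * ‖U‖ ^ 2 * ‖N‖ ^ 2 * ‖y‖ ^ 2 * S := by gcongr
      _ = B * ‖U‖ ^ 2 * ‖N‖ ^ 2 * S * ‖y‖ ^ 2 := by ring

/-- Let `(f k)` and `(g k)` be Bessel sequences in `H`, with `(f k)` having
Bessel bound `B`, and `U` a nonzero bounded operator on `ℓ²(ℕ)`. If the generalized Bessel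
multiplier `M = D_g ∘ U ∘ C_f` is invertible (with inverse `N`), then `(g k)` satisfies the
lower frame condition: `‖y‖² ≤ B ‖U‖² ‖N‖² ∑ₖ |⟨g k, y⟩|²` for every `y ∈ H`. -/
theorem lower_frame_condition_of_invertible_multiplier
    {H : Type*} [NormedAddCommGroup H] [InnerProductSpace ℂ H] [CompleteSpace H]
    (f g : ℕ → H) (B B' : ℝ) (hB : 0 < B) (hB' : 0 < B')
    (hf : ∀ x : H, Summable (fun k => ‖(inner ℂ (f k) x : ℂ)‖ ^ 2) ∧
      ∑' k, ‖(inner ℂ (f k) x : ℂ)‖ ^ 2 ≤ B * ‖x‖ ^ 2)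
    (hg : ∀ y : H, Summable (fun k => ‖(inner ℂ (g k) y : ℂ)‖ ^ 2) ∧
      ∑' k, ‖(inner ℂ (g k) y : ℂ)‖ ^ 2 ≤ B' * ‖y‖ ^ 2)
    (U : ℓ² →L[ℂ] ℓ²) (hU : U ≠ 0)
    (C : H →L[ℂ] ℓ²) (D : ℓ² →L[ℂ] H)
    (hC : ∀ (x : H) (k : ℕ), C x k = (inner ℂ (f k) x : ℂ))
    (hD : ∀ c : ℓ², HasSum (fun k => c k • g k) (D c))
    (N : H →L[ℂ] H)
    (hMN : (D.comp (U.comp C)).comp N = ContinuousLinearMap.id ℂ H)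
    (hNM : N.comp (D.comp (U.comp C)) = ContinuousLinearMap.id ℂ H) :
    ∀ y : H, ‖y‖ ^ 2 ≤ B * ‖U‖ ^ 2 * ‖N‖ ^ 2 * ∑' k, ‖(inner ℂ (g k) y : ℂ)‖ ^ 2 :=
  lower_frame_condition_of_invertible_multiplier_general f g B B' hB hf hg U C D hC hD N hMN
end
end

section
/- Let (g_k)_{k∈ℕ} be a Riesz basis and (f_k)_{k∈ℕ} a Bessel sequence for a Hilbert space H, and let U be a bijective bounded operator on ℓ²(ℕ). Then the generalized Bessel multiplier M_{U,(g_k),(f_k)} = D_{(g_k)} ∘ U ∘ C_{(f_k)} is invertible in B(H) if and only if (f_k) is a Riesz basis for H. -/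
/-!
`D_g` is bounded below with dense range, hence bijective, and `U` is bijective, so `M` is
invertible exactly when `C_f` is bijective. Since `C_f` is the adjoint of `D_f`, this happens
exactly when `D_f` is bijective, and by the bounded inverse theorem a synthesis operator is
bijective exactly when it has dense range and is bounded below, i.e. when `(f_k)` is a Riesz
basis.
-/

local notation "ℓ²" => lp (fun _ : ℕ => ℂ) 2

open Function ContinuousLinearMap

section LowerBound

variable {𝕜 E F : Type*} [NontriviallyNormedField 𝕜] [NormedAddCommGroup E] [NormedSpace 𝕜 E]
  [NormedAddCommGroup F] [NormedSpace 𝕜 F]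

theorem ContinuousLinearMap.antilipschitz_of_sq_le_sq_norm (T : E →L[𝕜] F) {A : ℝ} (hA : 0 < A)
    (h : ∀ c, A * ‖c‖ ^ 2 ≤ ‖T c‖ ^ 2) :
    ∃ K, AntilipschitzWith K T :=
  ⟨⟨(√A)⁻¹, by positivity⟩, T.antilipschitz_of_bound fun c => by
    change ‖c‖ ≤ (√A)⁻¹ * ‖T c‖
    rw [inv_mul_eq_div, le_div_iff₀ (Real.sqrt_pos.2 hA), mul_comm,
      ← pow_le_pow_iff_left₀ (by positivity) (norm_nonneg _) two_ne_zero, mul_pow,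
      Real.sq_sqrt hA.le]
    exact h c⟩

theorem ContinuousLinearMap.bijective_of_antilipschitz_of_denseRange [CompleteSpace E]
    (T : E →L[𝕜] F) {K : NNReal} (hK : AntilipschitzWith K T) (hT : DenseRange T) :
    Bijective T := by
  refine ⟨hK.injective, ?_⟩
  have hclosed : IsClosed (Set.range T) := hK.isClosed_range T.uniformContinuous
  rw [← Set.range_eq_univ, ← hclosed.closure_eq, hT.closure_range]

theorem ContinuousLinearMap.exists_sq_norm_bounds_of_bijective [CompleteSpace E] [CompleteSpace F]
    (T : E →L[𝕜] F) (hT : Bijective T) :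
    ∃ A > (0 : ℝ), ∃ B > (0 : ℝ), ∀ c, A * ‖c‖ ^ 2 ≤ ‖T c‖ ^ 2 ∧ ‖T c‖ ^ 2 ≤ B * ‖c‖ ^ 2 := by
  obtain ⟨K, hK⟩ := T.antilipschitz_of_injective_of_isClosed_range hT.1
    (by rw [hT.2.range_eq]; exact isClosed_univ)
  refine ⟨((K + 1) ^ 2)⁻¹, by positivity, (‖T‖ + 1) ^ 2, by positivity, fun c => ⟨?_, ?_⟩⟩
  · have hle : ‖c‖ ≤ (K + 1) * ‖T c‖ := by
      calc ‖c‖ ≤ K * ‖T c‖ := by simpa using hK.le_mul_norm_sub 0 c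
        _ ≤ (K + 1) * ‖T c‖ := by gcongr; linarith
    rw [inv_mul_le_iff₀ (by positivity), ← mul_pow]
    gcongr
  · calc ‖T c‖ ^ 2 ≤ (‖T‖ * ‖c‖) ^ 2 := by gcongr; exact T.le_opNorm c
      _ ≤ (‖T‖ + 1) ^ 2 * ‖c‖ ^ 2 := by rw [mul_pow]; gcongr; linarith

end LowerBound

section Synthesis

variable {ι 𝕜 H : Type*} [NontriviallyNormedField 𝕜] [NormedAddCommGroup H] [NormedSpace 𝕜 H]
  {p : ENNReal} [Fact (1 ≤ p)] (h : ι → H) (D : lp (fun _ : ι => 𝕜) p →L[𝕜] H)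

theorem synthesis_apply_single [DecidableEq ι] (hD : ∀ c, HasSum (fun k => c k • h k) (D c))
    (k : ι) :
    D (lp.single p k 1) = h k := by
  refine (hD _).unique ?_
  convert hasSum_ite_eq k (h k) using 2 with j
  by_cases hj : j = k
  · subst hj; simp
  · simp [hj]

theorem denseRange_synthesis_iff (hD : ∀ c, HasSum (fun k => c k • h k) (D c)) :
    DenseRange D ↔ (Submodule.span 𝕜 (Set.range h)).topologicalClosure = ⊤ := by
  classical
  set S := (Submodule.span 𝕜 (Set.range h)).topologicalClosure
  have hrange : Set.range D ⊆ S := by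
    rintro _ ⟨c, rfl⟩
    rw [← (hD c).tsum_eq]
    exact tsum_mem (Submodule.isClosed_topologicalClosure _) fun k =>
      Submodule.le_topologicalClosure _ (Submodule.smul_mem _ _ (Submodule.subset_span ⟨k, rfl⟩))
  have hspan : (Submodule.span 𝕜 (Set.range h) : Set H) ⊆ Set.range D := by
    have hle : Submodule.span 𝕜 (Set.range h) ≤
        LinearMap.range (D : lp (fun _ : ι => 𝕜) p →ₗ[𝕜] H) := by
      rw [Submodule.span_le]
      rintro _ ⟨k, rfl⟩
      exact ⟨lp.single p k 1, synthesis_apply_single h D hD k⟩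
    exact fun x hx => LinearMap.mem_range.1 (hle hx)
  have hclosure : closure (Set.range D) = S :=
    (closure_minimal hrange (Submodule.isClosed_topologicalClosure _)).antisymm
      (by rw [Submodule.topologicalClosure_coe]; exact closure_mono hspan)
  rw [DenseRange, dense_iff_closure_eq, hclosure, Submodule.coe_eq_univ]

theorem bijective_synthesis_of_lower_bound [CompleteSpace 𝕜]
    (hD : ∀ c, HasSum (fun k => c k • h k) (D c))
    (hspan : (Submodule.span 𝕜 (Set.range h)).topologicalClosure = ⊤) {A : ℝ} (hA : 0 < A)
    (hlow : ∀ c, A * ‖c‖ ^ 2 ≤ ‖D c‖ ^ 2) : Bijective D :=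
  have ⟨_, hK⟩ := D.antilipschitz_of_sq_le_sq_norm hA hlow
  D.bijective_of_antilipschitz_of_denseRange hK ((denseRange_synthesis_iff h D hD).2 hspan)

end Synthesis

section Adjoint

variable {𝕜 E F : Type*} [RCLike 𝕜] [NormedAddCommGroup E] [InnerProductSpace 𝕜 E]
  [CompleteSpace E] [NormedAddCommGroup F] [InnerProductSpace 𝕜 F] [CompleteSpace F]

theorem ContinuousLinearMap.bijective_adjoint (T : E →L[𝕜] F) (hT : Bijective T) :
    Bijective (adjoint T) := by
  let e := ContinuousLinearEquiv.ofBijective T (LinearMap.ker_eq_bot.2 hT.1)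
    (LinearMap.range_eq_top.2 hT.2)
  have hTe : T ∘L (e.symm : F →L[𝕜] E) = .id 𝕜 F := by ext y; exact e.apply_symm_apply y
  have heT : (e.symm : F →L[𝕜] E) ∘L T = .id 𝕜 E := by ext x; exact e.symm_apply_apply x
  refine bijective_iff_has_inverse.2 ⟨adjoint (e.symm : F →L[𝕜] E), fun y => ?_, fun x => ?_⟩
  · rw [← comp_apply, ← adjoint_comp, hTe, adjoint_id, id_apply]
  · rw [← comp_apply, ← adjoint_comp, heT, adjoint_id, id_apply]

theorem ContinuousLinearMap.bijective_adjoint_iff (T : E →L[𝕜] F) :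
    Bijective (adjoint T) ↔ Bijective T :=
  ⟨fun h => by simpa using (adjoint T).bijective_adjoint h, T.bijective_adjoint⟩

theorem analysis_eq_adjoint_synthesis {ι : Type*} (h : ι → E)
    (D : lp (fun _ : ι => 𝕜) 2 →L[𝕜] E) (C : E →L[𝕜] lp (fun _ : ι => 𝕜) 2)
    (hD : ∀ c, HasSum (fun k => c k • h k) (D c))
    (hC : ∀ x k, C x k = inner 𝕜 (h k) x) :
    C = adjoint D := by
  rw [eq_adjoint_iff]
  intro x c
  refine (lp.hasSum_inner (C x) c).unique ?_
  convert (innerSL 𝕜 x).hasSum (hD c) using 1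
  · funext k
    simp [hC, RCLike.inner_apply, mul_comm]
  · rw [innerSL_apply_apply]

end Adjoint

theorem multiplier_invertible_iff_riesz_basis_general
    {H : Type*} [NormedAddCommGroup H] [InnerProductSpace ℂ H] [CompleteSpace H]
    (f g : ℕ → H) (A' B' : ℝ) (hA' : 0 < A')
    (Df Dg : ℓ² →L[ℂ] H) (Cf : H →L[ℂ] ℓ²)
    (hDf : ∀ c : ℓ², HasSum (fun k => c k • f k) (Df c))
    (hDg : ∀ c : ℓ², HasSum (fun k => c k • g k) (Dg c))
    (hCf : ∀ (x : H) (k : ℕ), Cf x k = (inner ℂ (f k) x : ℂ))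
    (hgspan : (Submodule.span ℂ (Set.range g)).topologicalClosure = ⊤)
    (hgRiesz : ∀ c : ℓ², A' * ‖c‖ ^ 2 ≤ ‖Dg c‖ ^ 2 ∧ ‖Dg c‖ ^ 2 ≤ B' * ‖c‖ ^ 2)
    (U : ℓ² →L[ℂ] ℓ²) (hU : Function.Bijective (U : ℓ² → ℓ²)) :
    IsUnit (Dg.comp (U.comp Cf)) ↔
      ((Submodule.span ℂ (Set.range f)).topologicalClosure = ⊤ ∧
        ∃ A₁ > (0 : ℝ), ∃ B₁ > (0 : ℝ), ∀ c : ℓ²,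
          A₁ * ‖c‖ ^ 2 ≤ ‖Df c‖ ^ 2 ∧ ‖Df c‖ ^ 2 ≤ B₁ * ‖c‖ ^ 2) := by
  have hDg_bij := bijective_synthesis_of_lower_bound g Dg hDg hgspan hA' fun c => (hgRiesz c).1
  rw [isUnit_iff_bijective, coe_comp, coe_comp, hDg_bij.of_comp_iff', hU.of_comp_iff',
    analysis_eq_adjoint_synthesis f Df Cf hDf hCf, bijective_adjoint_iff]
  refine ⟨fun hDf_bij => ⟨(denseRange_synthesis_iff f Df hDf).1 hDf_bij.2.denseRange,
    Df.exists_sq_norm_bounds_of_bijective hDf_bij⟩, ?_⟩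
  rintro ⟨hspan, A₁, hA₁, _, _, hbounds⟩
  exact bijective_synthesis_of_lower_bound f Df hDf hspan hA₁ fun c => (hbounds c).1

/-- Let `(g k)` be a Riesz basis and `(f k)` a Bessel sequence for `H`,
and let `U` be a bijective bounded operator on `ℓ²(ℕ)`. Then the generalized Bessel
multiplier `M = D_g ∘ U ∘ C_f` is invertible in `B(H)` if and only if `(f k)` is a Riesz
basis for `H`. -/
theorem multiplier_invertible_iff_riesz_basis
    {H : Type*} [NormedAddCommGroup H] [InnerProductSpace ℂ H] [CompleteSpace H]
    (f g : ℕ → H) (B A' B' : ℝ) (hB : 0 < B) (hA' : 0 < A') (hB' : 0 < B')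
    (hf : ∀ x : H, Summable (fun k => ‖(inner ℂ (f k) x : ℂ)‖ ^ 2) ∧
      ∑' k, ‖(inner ℂ (f k) x : ℂ)‖ ^ 2 ≤ B * ‖x‖ ^ 2)
    (Df Dg : ℓ² →L[ℂ] H) (Cf : H →L[ℂ] ℓ²)
    (hDf : ∀ c : ℓ², HasSum (fun k => c k • f k) (Df c))
    (hDg : ∀ c : ℓ², HasSum (fun k => c k • g k) (Dg c))
    (hCf : ∀ (x : H) (k : ℕ), Cf x k = (inner ℂ (f k) x : ℂ))
    (hgspan : (Submodule.span ℂ (Set.range g)).topologicalClosure = ⊤)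
    (hgRiesz : ∀ c : ℓ², A' * ‖c‖ ^ 2 ≤ ‖Dg c‖ ^ 2 ∧ ‖Dg c‖ ^ 2 ≤ B' * ‖c‖ ^ 2)
    (U : ℓ² →L[ℂ] ℓ²) (hU : Function.Bijective (U : ℓ² → ℓ²)) :
    IsUnit (Dg.comp (U.comp Cf)) ↔
      ((Submodule.span ℂ (Set.range f)).topologicalClosure = ⊤ ∧
        ∃ A₁ > (0 : ℝ), ∃ B₁ > (0 : ℝ), ∀ c : ℓ²,
          A₁ * ‖c‖ ^ 2 ≤ ‖Df c‖ ^ 2 ∧ ‖Df c‖ ^ 2 ≤ B₁ * ‖c‖ ^ 2) :=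
  multiplier_invertible_iff_riesz_basis_general f g A' B' hA' Df Dg Cf hDf hDg hCf hgspan hgRiesz U
    hU
end

section
/- Let (f_k)_{k∈ℕ} ⊂ H₁ be a Bessel sequence with bound B, U a bounded operator on ℓ²(ℕ), and (g_k)_{k∈ℕ}, (g'_k)_{k∈ℕ} ⊂ H₂ two Bessel sequences with ∑_k ‖g'_k − g_k‖² < ∞. Then for every orthonormal basis (e_n)_{n∈ℕ} of H₁, ∑_n ‖(M_{U,(g'_k),(f_k)} − M_{U,(g_k),(f_k)})(e_n)‖² ≤ B‖U‖² · ∑_k ‖g'_k − g_k‖²; in particular, the difference of the two generalized Bessel multipliers is a Hilbert–Schmidt operator whose Hilbert–Schmidt norm is at most √B·‖U‖·(∑_k ‖g'_k − g_k‖²)^{1/2}. -/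
/-!
Write the difference of the multipliers as `S ∘ A` with `A = U C` and `S = D' - D`, the
synthesis operator of `(g' k - g k)`; the Bessel bound gives `‖A‖ ≤ ‖U‖ √B`. Parseval in both
spaces and Tonelli in `ℝ≥0∞` show that `∑ₙ ‖T eₙ‖² = ∑ᵢ ‖T† uᵢ‖²` for every bounded `T` and
any Hilbert basis `(uᵢ)` of its target. Hence `∑ₙ ‖S A eₙ‖² = ∑ᵢ ‖A† S† uᵢ‖² ≤ ‖A‖² ∑ᵢ ‖S† uᵢ‖²`,
and computing the last sum back in the standard basis `(δₖ)` of `ℓ²` gives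
`‖A‖² ∑ₖ ‖S δₖ‖² = ‖A‖² ∑ₖ ‖g' k - g k‖²`.
-/

noncomputable section

local notation "ℓ²" => lp (fun _ : ℕ => ℂ) 2

open scoped ENNReal InnerProductSpace lp

section
variable {ι κ 𝕜 E F G : Type*} [RCLike 𝕜]
  [NormedAddCommGroup E] [InnerProductSpace 𝕜 E]
  [NormedAddCommGroup F] [InnerProductSpace 𝕜 F]
  [NormedAddCommGroup G] [InnerProductSpace 𝕜 G]

theorem lp.hasSum_norm_sq (c : ℓ²(ι, 𝕜)) : HasSum (fun i => ‖c i‖ ^ 2) (‖c‖ ^ 2) := by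
  simpa using lp.hasSum_norm (p := 2) (by norm_num) c

theorem HilbertBasis.hasSum_norm_inner_sq (b : HilbertBasis ι 𝕜 E) (x : E) :
    HasSum (fun i => ‖⟪b i, x⟫_𝕜‖ ^ 2) (‖x‖ ^ 2) := by
  simpa [b.repr_apply_apply] using lp.hasSum_norm_sq (b.repr x)

theorem HilbertBasis.tsum_enorm_inner_sq (b : HilbertBasis ι 𝕜 E) (x : E) :
    ∑' i, ‖⟪b i, x⟫_𝕜‖ₑ ^ 2 = ‖x‖ₑ ^ 2 := by
  have := ENNReal.ofReal_tsum_of_nonneg (fun i => sq_nonneg _)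
    (b.hasSum_norm_inner_sq x).summable
  simp_rw [(b.hasSum_norm_inner_sq x).tsum_eq, ENNReal.ofReal_pow (norm_nonneg _),
    ofReal_norm] at this
  exact this.symm

theorem ContinuousLinearMap.norm_le_sqrt_of_bessel {f : ι → E} {B : ℝ} (hB : 0 ≤ B)
    (hf : ∀ x, ∑' k, ‖⟪f k, x⟫_𝕜‖ ^ 2 ≤ B * ‖x‖ ^ 2) (C : E →L[𝕜] ℓ²(ι, 𝕜))
    (hC : ∀ x k, C x k = ⟪f k, x⟫_𝕜) : ‖C‖ ≤ √B := by
  refine C.opNorm_le_bound (Real.sqrt_nonneg B) fun x => ?_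
  have hCx : ‖C x‖ ^ 2 ≤ (√B * ‖x‖) ^ 2 := by
    rw [mul_pow, Real.sq_sqrt hB, ← (lp.hasSum_norm_sq (C x)).tsum_eq]
    simpa only [hC] using hf x
  exact (pow_le_pow_iff_left₀ (norm_nonneg _) (by positivity) two_ne_zero).mp hCx

theorem HilbertBasis.default_apply [DecidableEq ι] (i : ι) :
    (default : HilbertBasis ι 𝕜 ℓ²(ι, 𝕜)) i = lp.single 2 i 1 := by
  rw [← HilbertBasis.repr_symm_single]; rfl

theorem ContinuousLinearMap.apply_lp_single_of_hasSum [DecidableEq ι] {h : ι → E}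
    (S : ℓ²(ι, 𝕜) →L[𝕜] E) (hS : ∀ c : ℓ²(ι, 𝕜), HasSum (fun k => c k • h k) (S c)) (k : ι) :
    S (lp.single 2 k 1) = h k := by
  refine (hS _).unique ?_
  convert hasSum_single k fun j (hj : j ≠ k) => ?_
  · simp [lp.single_apply]
  · simp [lp.single_apply, Pi.single_eq_of_ne hj]

theorem summable_and_tsum_le_of_tsum_enorm_sq_le {x : ι → E} {c : ℝ} (hc : 0 ≤ c)
    (h : ∑' i, ‖x i‖ₑ ^ 2 ≤ ENNReal.ofReal c) :
    Summable (fun i => ‖x i‖ ^ 2) ∧ ∑' i, ‖x i‖ ^ 2 ≤ c := by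
  have hne : ∑' i, ‖x i‖ₑ ^ 2 ≠ ∞ := ne_top_of_le_ne_top ENNReal.ofReal_ne_top h
  have hreal : ∀ i, (‖x i‖ₑ ^ 2).toReal = ‖x i‖ ^ 2 := fun i => by
    rw [ENNReal.toReal_pow, toReal_enorm]
  refine ⟨by simpa only [hreal] using ENNReal.summable_toReal hne, ?_⟩
  calc ∑' i, ‖x i‖ ^ 2 = (∑' i, ‖x i‖ₑ ^ 2).toReal := by
        simp only [← hreal, ENNReal.tsum_toReal_eq fun i => ENNReal.pow_ne_top enorm_ne_top]
    _ ≤ c := ENNReal.toReal_le_of_le_ofReal hc h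

variable [CompleteSpace E] [CompleteSpace F] [CompleteSpace G]

theorem HilbertBasis.tsum_enorm_apply_sq_eq_adjoint (e : HilbertBasis ι 𝕜 E)
    (u : HilbertBasis κ 𝕜 F) (T : E →L[𝕜] F) :
    ∑' n, ‖T (e n)‖ₑ ^ 2 = ∑' i, ‖T.adjoint (u i)‖ₑ ^ 2 := calc
  ∑' n, ‖T (e n)‖ₑ ^ 2 = ∑' n, ∑' i, ‖⟪u i, T (e n)⟫_𝕜‖ₑ ^ 2 := by
    simp only [u.tsum_enorm_inner_sq]
  _ = ∑' i, ∑' n, ‖⟪e n, T.adjoint (u i)⟫_𝕜‖ₑ ^ 2 := by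
    rw [ENNReal.tsum_comm]
    simp only [← T.adjoint_inner_left, ← inner_conj_symm (T.adjoint _), RCLike.enorm_conj]
  _ = ∑' i, ‖T.adjoint (u i)‖ₑ ^ 2 := by
    simp only [e.tsum_enorm_inner_sq]

theorem HilbertBasis.tsum_enorm_comp_apply_sq_le (e : HilbertBasis ι 𝕜 E)
    (v : HilbertBasis κ 𝕜 G) (S : G →L[𝕜] F) (A : E →L[𝕜] G) :
    ∑' n, ‖(S ∘L A) (e n)‖ₑ ^ 2 ≤ ‖A‖ₑ ^ 2 * ∑' k, ‖S (v k)‖ₑ ^ 2 := by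
  obtain ⟨w, u, -⟩ := exists_hilbertBasis 𝕜 F
  rw [e.tsum_enorm_apply_sq_eq_adjoint u, v.tsum_enorm_apply_sq_eq_adjoint u,
    ← ENNReal.tsum_mul_left]
  refine ENNReal.tsum_le_tsum fun i => ?_
  rw [ContinuousLinearMap.adjoint_comp, ← mul_pow]
  gcongr
  calc ‖A.adjoint (S.adjoint (u i))‖ₑ ≤ ‖A.adjoint‖ₑ * ‖S.adjoint (u i)‖ₑ := A.adjoint.le_opENorm _
    _ = ‖A‖ₑ * ‖S.adjoint (u i)‖ₑ := by rw [ContinuousLinearMap.adjoint.enorm_map]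

end

theorem generalized_multiplier_hilbert_schmidt_perturbation_general
    {H₁ H₂ : Type*} [NormedAddCommGroup H₁] [InnerProductSpace ℂ H₁] [CompleteSpace H₁]
    [NormedAddCommGroup H₂] [InnerProductSpace ℂ H₂] [CompleteSpace H₂]
    (f : ℕ → H₁) (g g' : ℕ → H₂) (B : ℝ) (hB : 0 < B)
    (hf : ∀ x : H₁, Summable (fun k => ‖(inner ℂ (f k) x : ℂ)‖ ^ 2) ∧
      ∑' k, ‖(inner ℂ (f k) x : ℂ)‖ ^ 2 ≤ B * ‖x‖ ^ 2)
    (hdiff : Summable (fun k => ‖g' k - g k‖ ^ 2))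
    (U : ℓ² →L[ℂ] ℓ²)
    (C : H₁ →L[ℂ] ℓ²) (D D' : ℓ² →L[ℂ] H₂)
    (hC : ∀ (x : H₁) (k : ℕ), C x k = (inner ℂ (f k) x : ℂ))
    (hD : ∀ c : ℓ², HasSum (fun k => c k • g k) (D c))
    (hD' : ∀ c : ℓ², HasSum (fun k => c k • g' k) (D' c)) :
    ∀ e : HilbertBasis ℕ ℂ H₁,
      Summable (fun n => ‖(D'.comp (U.comp C) - D.comp (U.comp C)) (e n)‖ ^ 2) ∧
      ∑' n, ‖(D'.comp (U.comp C) - D.comp (U.comp C)) (e n)‖ ^ 2 ≤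
        B * ‖U‖ ^ 2 * ∑' k, ‖g' k - g k‖ ^ 2 := by
  intro e
  have hA : ‖U ∘L C‖ₑ ^ 2 ≤ ENNReal.ofReal (B * ‖U‖ ^ 2) := by
    have hUC : ‖U ∘L C‖ ≤ ‖U‖ * √B := (U.opNorm_comp_le C).trans <| by
      gcongr; exact C.norm_le_sqrt_of_bessel hB.le (fun x => (hf x).2) hC
    rw [← ofReal_norm, ← ENNReal.ofReal_pow (norm_nonneg _)]
    refine ENNReal.ofReal_le_ofReal ?_
    calc ‖U ∘L C‖ ^ 2 ≤ (‖U‖ * √B) ^ 2 := by gcongr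
      _ = B * ‖U‖ ^ 2 := by rw [mul_pow, Real.sq_sqrt hB.le, mul_comm]
  have hsynth : ∀ c : ℓ², HasSum (fun k => c k • (g' k - g k)) ((D' - D) c) := fun c => by
    simpa only [smul_sub, sub_apply] using (hD' c).sub (hD c)
  have hS : ∀ k, (D' - D) ((default : HilbertBasis ℕ ℂ ℓ²) k) = g' k - g k := fun k => by
    rw [HilbertBasis.default_apply]
    exact (D' - D).apply_lp_single_of_hasSum hsynth k
  refine summable_and_tsum_le_of_tsum_enorm_sq_le (by positivity) ?_
  calc ∑' n, ‖(D'.comp (U.comp C) - D.comp (U.comp C)) (e n)‖ₑ ^ 2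
      ≤ ‖U ∘L C‖ₑ ^ 2 * ∑' k, ‖(D' - D) ((default : HilbertBasis ℕ ℂ ℓ²) k)‖ₑ ^ 2 := by
        rw [← ContinuousLinearMap.sub_comp]
        exact e.tsum_enorm_comp_apply_sq_le default _ _
    _ ≤ ENNReal.ofReal (B * ‖U‖ ^ 2) * ENNReal.ofReal (∑' k, ‖g' k - g k‖ ^ 2) := by
        rw [ENNReal.ofReal_tsum_of_nonneg (fun k => sq_nonneg _) hdiff]
        simp only [hS, ENNReal.ofReal_pow (norm_nonneg _), ofReal_norm]
        gcongr
    _ = ENNReal.ofReal (B * ‖U‖ ^ 2 * ∑' k, ‖g' k - g k‖ ^ 2) :=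
        (ENNReal.ofReal_mul (by positivity)).symm

/-- Let `(f k) ⊂ H₁` be a Bessel sequence with bound `B`, `U` a bounded
operator on `ℓ²(ℕ)`, and `(g k), (g' k) ⊂ H₂` two Bessel sequences with
`∑ₖ ‖g' k − g k‖² < ∞`. Then for every orthonormal (Hilbert) basis `(eₙ)` of `H₁`,
`∑ₙ ‖(M_{U,(g' k),(f k)} − M_{U,(g k),(f k)}) eₙ‖² ≤ B ‖U‖² ∑ₖ ‖g' k − g k‖²`; in
particular the difference of the two multipliers is Hilbert–Schmidt with Hilbert–Schmidt
norm at most `√B ‖U‖ (∑ₖ ‖g' k − g k‖²)^{1/2}`. -/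
theorem generalized_multiplier_hilbert_schmidt_perturbation
    {H₁ H₂ : Type*} [NormedAddCommGroup H₁] [InnerProductSpace ℂ H₁] [CompleteSpace H₁]
    [NormedAddCommGroup H₂] [InnerProductSpace ℂ H₂] [CompleteSpace H₂]
    (f : ℕ → H₁) (g g' : ℕ → H₂) (B Bg Bg' : ℝ) (hB : 0 < B) (hBg : 0 < Bg) (hBg' : 0 < Bg')
    (hf : ∀ x : H₁, Summable (fun k => ‖(inner ℂ (f k) x : ℂ)‖ ^ 2) ∧
      ∑' k, ‖(inner ℂ (f k) x : ℂ)‖ ^ 2 ≤ B * ‖x‖ ^ 2)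
    (hg : ∀ y : H₂, Summable (fun k => ‖(inner ℂ (g k) y : ℂ)‖ ^ 2) ∧
      ∑' k, ‖(inner ℂ (g k) y : ℂ)‖ ^ 2 ≤ Bg * ‖y‖ ^ 2)
    (hg' : ∀ y : H₂, Summable (fun k => ‖(inner ℂ (g' k) y : ℂ)‖ ^ 2) ∧
      ∑' k, ‖(inner ℂ (g' k) y : ℂ)‖ ^ 2 ≤ Bg' * ‖y‖ ^ 2)
    (hdiff : Summable (fun k => ‖g' k - g k‖ ^ 2))
    (U : ℓ² →L[ℂ] ℓ²)
    (C : H₁ →L[ℂ] ℓ²) (D D' : ℓ² →L[ℂ] H₂)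
    (hC : ∀ (x : H₁) (k : ℕ), C x k = (inner ℂ (f k) x : ℂ))
    (hD : ∀ c : ℓ², HasSum (fun k => c k • g k) (D c))
    (hD' : ∀ c : ℓ², HasSum (fun k => c k • g' k) (D' c)) :
    ∀ e : HilbertBasis ℕ ℂ H₁,
      Summable (fun n => ‖(D'.comp (U.comp C) - D.comp (U.comp C)) (e n)‖ ^ 2) ∧
      ∑' n, ‖(D'.comp (U.comp C) - D.comp (U.comp C)) (e n)‖ ^ 2 ≤
        B * ‖U‖ ^ 2 * ∑' k, ‖g' k - g k‖ ^ 2 :=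
  generalized_multiplier_hilbert_schmidt_perturbation_general f g g' B hB hf hdiff U C D D' hC hD
    hD'
end
end
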